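/- Sixth mixed pentagon relation: S''₁₂ · S'₂₃ = S'₂₃ · S₁₃ · S''₁₂ as matrices on V × V × V, where S' := (S⁻¹)^{t₁} and S'' := (S^{t₂})⁻¹. -/
import Mathlib


open Matrix BigOperators

/-- Matrix on `V × V × V` acting as `T` on the first and second factors. -/
def lift12 {k V : Type*} [Semiring k] [DecidableEq V]
    (T : Matrix (V × V) (V × V) k) : Matrix (V × V × V) (V × V × V) k :=
  Matrix.of fun p q =>
    T (p.1, p.2.1) (q.1, q.2.1) * (if p.2.2 = q.2.2 then 1 else 0)

/-- Matrix on `V × V × V` acting as `T` on the first and third factors. -/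
def lift13 {k V : Type*} [Semiring k] [DecidableEq V]
    (T : Matrix (V × V) (V × V) k) : Matrix (V × V × V) (V × V × V) k :=
  Matrix.of fun p q =>
    T (p.1, p.2.2) (q.1, q.2.2) * (if p.2.1 = q.2.1 then 1 else 0)

/-- Matrix on `V × V × V` acting as `T` on the second and third factors. -/
def lift23 {k V : Type*} [Semiring k] [DecidableEq V]
    (T : Matrix (V × V) (V × V) k) : Matrix (V × V × V) (V × V × V) k :=
  Matrix.of fun p q =>
    T (p.2.1, p.2.2) (q.2.1, q.2.2) * (if p.1 = q.1 then 1 else 0)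

/-- Partial transposition in the first factor: `T^{t₁}_{(a,b),(c,d)} = T_{(c,b),(a,d)}`. -/
def pt1 {k V : Type*} (T : Matrix (V × V) (V × V) k) : Matrix (V × V) (V × V) k :=
  Matrix.of fun p q => T (q.1, p.2) (p.1, q.2)

/-- Partial transposition in the second factor: `T^{t₂}_{(a,b),(c,d)} = T_{(a,d),(c,b)}`. -/
def pt2 {k V : Type*} (T : Matrix (V × V) (V × V) k) : Matrix (V × V) (V × V) k :=
  Matrix.of fun p q => T (p.1, q.2) (q.1, p.2)

section Aux
variable {k V : Type*} [CommRing k] [Fintype V] [DecidableEq V]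

/-- partial transpose in the middle factor of a triple -/
def theta2 (T : Matrix (V × V × V) (V × V × V) k) : Matrix (V × V × V) (V × V × V) k :=
  Matrix.of fun p q => T (p.1, q.2.1, p.2.2) (q.1, p.2.1, q.2.2)

lemma lift12_mul (A B : Matrix (V × V) (V × V) k) :
    lift12 (A * B) = lift12 A * lift12 B := by
  ext ⟨a,b,c⟩ ⟨d,e,f⟩
  simp [lift12, Matrix.mul_apply, Fintype.sum_prod_type, mul_ite, ite_mul,
    Finset.mul_sum, Finset.sum_mul]

lemma lift23_mul (A B : Matrix (V × V) (V × V) k) :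
    lift23 (A * B) = lift23 A * lift23 B := by
  ext ⟨a,b,c⟩ ⟨d,e,f⟩
  simp [lift23, Matrix.mul_apply, Fintype.sum_prod_type, mul_ite, ite_mul,
    Finset.mul_sum, Finset.sum_mul]

lemma lift12_one : lift12 (1 : Matrix (V × V) (V × V) k) = 1 := by
  ext ⟨a,b,c⟩ ⟨d,e,f⟩
  simp [lift12, Matrix.one_apply, Prod.ext_iff, and_assoc]
  aesop

lemma lift23_one : lift23 (1 : Matrix (V × V) (V × V) k) = 1 := by
  ext ⟨a,b,c⟩ ⟨d,e,f⟩
  simp [lift23, Matrix.one_apply, Prod.ext_iff, and_assoc]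
  aesop

lemma theta2_23_12 (A B : Matrix (V × V) (V × V) k) :
    theta2 (lift23 A * lift12 B) = lift12 (pt2 B) * lift23 (pt1 A) := by
  ext ⟨a,b,c⟩ ⟨d,e,f⟩
  simp [theta2, lift12, lift23, pt1, pt2, Matrix.mul_apply, Fintype.sum_prod_type,
    mul_ite, ite_mul, mul_comm]

lemma theta2_12_23 (A B : Matrix (V × V) (V × V) k) :
    theta2 (lift12 B * lift23 A) = lift23 (pt1 A) * lift12 (pt2 B) := by
  ext ⟨a,b,c⟩ ⟨d,e,f⟩
  simp [theta2, lift12, lift23, pt1, pt2, Matrix.mul_apply, Fintype.sum_prod_type,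
    mul_ite, ite_mul, mul_comm]

lemma theta2_mul_13 (M : Matrix (V × V × V) (V × V × V) k) (C : Matrix (V × V) (V × V) k) :
    theta2 (M * lift13 C) = theta2 M * lift13 C := by
  ext ⟨a,b,c⟩ ⟨d,e,f⟩
  simp [theta2, lift13, Matrix.mul_apply, Fintype.sum_prod_type, mul_ite, ite_mul]

end Aux


theorem mixed_pentagon_six
    {k V : Type*} [Field k] [Fintype V] [DecidableEq V]
    (S : Matrix (V × V) (V × V) k)
    (hSinv : IsUnit S) (hSt2inv : IsUnit (pt2 S))
    (hpent : lift12 S * lift13 S * lift23 S = lift23 S * lift12 S) :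
    lift12 (pt2 S)⁻¹ * lift23 (pt1 S⁻¹) = lift23 (pt1 S⁻¹) * lift13 S * lift12 (pt2 S)⁻¹ := by
  have hSdet : IsUnit S.det := (Matrix.isUnit_iff_isUnit_det S).mp hSinv
  have hS1 : S * S⁻¹ = 1 := Matrix.mul_nonsing_inv S hSdet
  have hS2 : S⁻¹ * S = 1 := Matrix.nonsing_inv_mul S hSdet
  have hPdet : IsUnit (pt2 S).det := (Matrix.isUnit_iff_isUnit_det _).mp hSt2inv
  have hP1 : pt2 S * (pt2 S)⁻¹ = 1 := Matrix.mul_nonsing_inv _ hPdet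
  have hP2 : (pt2 S)⁻¹ * pt2 S = 1 := Matrix.nonsing_inv_mul _ hPdet
  -- lift23 S⁻¹ is the two-sided inverse of lift23 S
  have h23a : lift23 S * lift23 S⁻¹ = (1 : Matrix (V × V × V) (V × V × V) k) := by
    rw [← lift23_mul, hS1, lift23_one]
  have h23b : lift23 (S⁻¹) * lift23 S = (1 : Matrix (V × V × V) (V × V × V) k) := by
    rw [← lift23_mul, hS2, lift23_one]
  have h12a : lift12 (pt2 S) * lift12 (pt2 S)⁻¹ = (1 : Matrix (V × V × V) (V × V × V) k) := by
    rw [← lift12_mul, hP1, lift12_one]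
  have h12b : lift12 (pt2 S)⁻¹ * lift12 (pt2 S) = (1 : Matrix (V × V × V) (V × V × V) k) := by
    rw [← lift12_mul, hP2, lift12_one]
  have hstar : lift12 S * lift23 (S⁻¹) = lift23 (S⁻¹) * lift12 S * lift13 S := by
    calc lift12 S * lift23 (S⁻¹)
        = lift23 (S⁻¹) * (lift23 S * (lift12 S * lift23 (S⁻¹))) := by
          rw [← mul_assoc, ← mul_assoc, h23b, one_mul]
      _ = lift23 (S⁻¹) * (lift23 S * lift12 S * lift23 (S⁻¹)) := by
          rw [mul_assoc (lift23 S)]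
      _ = lift23 (S⁻¹) * (lift12 S * lift13 S * lift23 S * lift23 (S⁻¹)) := by rw [hpent]
      _ = lift23 (S⁻¹) * (lift12 S * lift13 S) := by
          rw [mul_assoc (lift12 S * lift13 S), h23a, mul_one]
      _ = lift23 (S⁻¹) * lift12 S * lift13 S := by rw [mul_assoc]
  have hstar2 : lift23 (pt1 S⁻¹) * lift12 (pt2 S) =
      lift12 (pt2 S) * lift23 (pt1 S⁻¹) * lift13 S := by
    have h := congrArg theta2 hstar
    rwa [theta2_12_23, theta2_mul_13, theta2_23_12] at h
  calc lift12 (pt2 S)⁻¹ * lift23 (pt1 S⁻¹)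
      = lift12 (pt2 S)⁻¹ * (lift23 (pt1 S⁻¹) * lift12 (pt2 S) * lift12 (pt2 S)⁻¹) := by
        rw [mul_assoc (lift23 (pt1 S⁻¹)), h12a, mul_one]
    _ = lift12 (pt2 S)⁻¹ * (lift12 (pt2 S) * lift23 (pt1 S⁻¹) * lift13 S * lift12 (pt2 S)⁻¹) := by
        rw [hstar2]
    _ = lift23 (pt1 S⁻¹) * lift13 S * lift12 (pt2 S)⁻¹ := by
        rw [← mul_assoc, ← mul_assoc, ← mul_assoc, h12b, one_mul]
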